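/- (Mysovskikh-type convergence of the sparse-Newton method) Let P : ℝⁿ → ℝᵐ be continuously differentiable, u⁰ ∈ ℝⁿ, s = ‖P(u⁰)‖_∞, ρ > 0, B_ρ = {u : ‖u − u⁰‖₁ ≤ ρ}. Assume: (A') there is μ > 0 with ‖P'(u)ᵀh‖_∞ ≥ μ‖h‖₁ for all h ∈ ℝᵐ and all u ∈ B_ρ; (B) there is L > 0 with ‖(P'(a) − P'(b))v‖_∞ ≤ L‖a−b‖₁‖v‖₁ for all a, b ∈ B_ρ and v ∈ ℝⁿ; and the conditions h := Ls/μ² < 2 and (2μ/L)·H₀(h/2) < ρ hold. Then every sparse-Newton sequence (uᵏ) from u⁰ with unit step-size is well defined, remains in B_ρ, and converges to a point u* with P(u*) = 0 and ‖u⁰ − u*‖₁ ≤ (2μ/L)·H₀(Ls/(2μ²)). -/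

import Mathlib

open Filter Topology

/-- The ℓ1-norm on `ℝ^d`: `‖x‖₁ = Σᵢ |xᵢ|`. -/
noncomputable def l1Norm {d : ℕ} (x : Fin d → ℝ) : ℝ := ∑ i, |x i|

/-- The ℓ∞-norm on `ℝ^d`: `‖x‖_∞ = maxᵢ |xᵢ|`. -/
noncomputable def linfNorm {d : ℕ} (x : Fin d → ℝ) : ℝ := ⨆ i, |x i|

/-- `H₀(δ) = Σ_{ℓ=0}^∞ δ^(2^ℓ)`. -/
noncomputable def H0 (δ : ℝ) : ℝ := ∑' ℓ : ℕ, δ ^ (2 ^ ℓ)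

/-- The transpose of a continuous linear map `A : ℝⁿ → ℝᵐ` applied to `h ∈ ℝᵐ`:
`(Aᵀ h)ᵢ = Σⱼ Aⱼᵢ hⱼ` where `Aⱼᵢ = (A eᵢ)ⱼ`. -/
noncomputable def transposeApply {n m : ℕ} (A : (Fin n → ℝ) →L[ℝ] (Fin m → ℝ))
    (h : Fin m → ℝ) : Fin n → ℝ :=
  fun i => ∑ j, A (Pi.single i 1) j * h j

lemma l1Norm_nonneg {d : ℕ} (x : Fin d → ℝ) : 0 ≤ l1Norm x :=
  Finset.sum_nonneg fun i _ => abs_nonneg _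

lemma l1Norm_add_le {d : ℕ} (x y : Fin d → ℝ) : l1Norm (x + y) ≤ l1Norm x + l1Norm y := by
  have : l1Norm (x+y) ≤ ∑ i, (|x i| + |y i|) :=
    Finset.sum_le_sum fun i _ => abs_add_le _ _
  simpa [l1Norm, Finset.sum_add_distrib] using this

lemma l1Norm_smul {d : ℕ} (c : ℝ) (x : Fin d → ℝ) : l1Norm (c • x) = |c| * l1Norm x := by
  simp [l1Norm, Finset.mul_sum, abs_mul]

lemma l1Norm_neg {d : ℕ} (x : Fin d → ℝ) : l1Norm (-x) = l1Norm x := by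
  simp [l1Norm]

lemma l1Norm_eq_zero_iff {d : ℕ} (x : Fin d → ℝ) : l1Norm x = 0 ↔ x = 0 := by
  constructor
  · intro h
    funext i
    have := (Finset.sum_eq_zero_iff_of_nonneg (fun i _ => abs_nonneg (x i))).1 h i (by simp)
    simpa using this
  · rintro rfl; simp [l1Norm]

lemma norm_le_l1Norm {d : ℕ} (x : Fin d → ℝ) : ‖x‖ ≤ l1Norm x := by
  rw [pi_norm_le_iff_of_nonneg (l1Norm_nonneg x)]
  intro i
  rw [Real.norm_eq_abs]
  exact Finset.single_le_sum (f := fun i => |x i|) (fun i _ => abs_nonneg _) (by simp)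

lemma linfNorm_eq_norm {d : ℕ} (x : Fin d → ℝ) : linfNorm x = ‖x‖ := by
  rcases Nat.eq_zero_or_pos d with rfl | hd
  · have : x = 0 := Subsingleton.elim x 0
    subst this
    rw [linfNorm, Real.iSup_of_isEmpty, norm_zero]
  · have : Nonempty (Fin d) := Fin.pos_iff_nonempty.1 hd
    apply le_antisymm
    · exact ciSup_le fun i => by simpa [Real.norm_eq_abs] using norm_le_pi_norm x i
    · rw [pi_norm_le_iff_of_nonneg]
      · intro i
        rw [Real.norm_eq_abs]
        exact le_ciSup (f := fun i => |x i|) (Set.Finite.bddAbove (Set.finite_range _)) i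
      · exact Real.iSup_nonneg fun i => abs_nonneg _

lemma linfNorm_nonneg {d : ℕ} (x : Fin d → ℝ) : 0 ≤ linfNorm x := by
  rw [linfNorm_eq_norm]; exact norm_nonneg _

lemma linfNorm_le_l1Norm {d : ℕ} (x : Fin d → ℝ) : linfNorm x ≤ l1Norm x := by
  rw [linfNorm_eq_norm]; exact norm_le_l1Norm x

lemma continuous_l1Norm {d : ℕ} : Continuous (l1Norm (d := d)) := by
  unfold l1Norm
  fun_prop

lemma abs_le_linfNorm {d : ℕ} (x : Fin d → ℝ) (i : Fin d) : |x i| ≤ linfNorm x := by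
  rw [linfNorm_eq_norm, ← Real.norm_eq_abs]; exact norm_le_pi_norm x i

lemma lin_rep {m : ℕ} (g : (Fin m → ℝ) →ₗ[ℝ] ℝ) (y : Fin m → ℝ) :
    g y = ∑ j, y j * g (Pi.single j 1) := by
  conv_lhs => rw [g.pi_apply_eq_sum_univ y]
  refine Finset.sum_congr rfl fun i _ => ?_
  rw [smul_eq_mul]
  congr 2
  funext j
  simp [Pi.single_apply, eq_comm]

lemma l1Norm_single {d : ℕ} (i : Fin d) : l1Norm (Pi.single i (1:ℝ)) = 1 := by
  rw [l1Norm]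
  rw [Finset.sum_eq_single i]
  · simp
  · intro j _ hj; simp [Pi.single_apply, hj]
  · simp

lemma linfNorm_zero {d : ℕ} : linfNorm (0 : Fin d → ℝ) = 0 := by
  rw [linfNorm_eq_norm, norm_zero]

lemma transposeApply_eq {n m : ℕ} (A : (Fin n → ℝ) →L[ℝ] (Fin m → ℝ))
    (g : (Fin m → ℝ) →ₗ[ℝ] ℝ) (i : Fin n) :
    transposeApply A (fun j => g (Pi.single j 1)) i = g (A (Pi.single i 1)) := by
  rw [transposeApply, lin_rep g (A (Pi.single i 1))]

/-- Surjectivity of `A` from lower bound on transpose. -/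
lemma surj_of_transpose {n m : ℕ} (A : (Fin n → ℝ) →L[ℝ] (Fin m → ℝ)) (μ : ℝ) (hμ : 0 < μ)
    (hA : ∀ h, μ * l1Norm h ≤ linfNorm (transposeApply A h)) :
    Function.Surjective A := by
  have : Function.Surjective (A : (Fin n → ℝ) →ₗ[ℝ] (Fin m → ℝ)) := by
    rw [← LinearMap.dualMap_injective_iff]
    rw [← LinearMap.ker_eq_bot]
    rw [LinearMap.ker_eq_bot']
    intro φ hφ
    have hφA : ∀ v, φ (A v) = 0 := by
      intro v
      have : (A : (Fin n → ℝ) →ₗ[ℝ] (Fin m → ℝ)).dualMap φ v = 0 := by rw [hφ]; rfl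
      exact this
    set η : Fin m → ℝ := fun j => φ (Pi.single j 1) with hη
    have hT : transposeApply A η = 0 := by
      funext i
      rw [hη, transposeApply_eq A φ i, hφA]
      rfl
    have h0 : μ * l1Norm η ≤ 0 := by
      have := hA η; rwa [hT, linfNorm_zero] at this
    have : l1Norm η = 0 := by nlinarith [l1Norm_nonneg η]
    have hη0 : η = 0 := (l1Norm_eq_zero_iff η).1 this
    ext y
    simpa [LinearMap.comp_apply, LinearMap.single_apply] using congrFun hη0 y
  exact this

/-- Dual certificate bound for minimal ℓ1 solutions. -/
lemma sparse_bound {n m : ℕ} (A : (Fin n → ℝ) →L[ℝ] (Fin m → ℝ)) (μ : ℝ) (hμ : 0 < μ)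
    (hA : ∀ h, μ * l1Norm h ≤ linfNorm (transposeApply A h))
    (b : Fin m → ℝ) (w : Fin n → ℝ) (hw : A w = b)
    (hmin : ∀ v, A v = b → l1Norm w ≤ l1Norm v) :
    l1Norm w ≤ linfNorm b / μ := by
  have hsurj := surj_of_transpose A μ hμ hA
  by_cases hb : b = 0
  · subst hb
    have h1 := hmin 0 (by simp)
    have h00 : l1Norm (0 : Fin n → ℝ) = 0 := by simp [l1Norm]
    rw [h00] at h1
    have h2 : (0:ℝ) ≤ linfNorm (0 : Fin m → ℝ) / μ := by
      rw [linfNorm_zero]; positivity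
    linarith
  -- the value function ψ
  set ψ : (Fin m → ℝ) → ℝ := fun b' => ⨅ v : {v : Fin n → ℝ // A v = b'}, l1Norm v.val with hψdef
  have hne : ∀ b' : Fin m → ℝ, Nonempty {v : Fin n → ℝ // A v = b'} := by
    intro b'; obtain ⟨v, hv⟩ := hsurj b'; exact ⟨⟨v, hv⟩⟩
  have hbdd : ∀ b' : Fin m → ℝ, BddBelow (Set.range fun v : {v : Fin n → ℝ // A v = b'} => l1Norm v.val) := by
    intro b'; exact ⟨0, by rintro x ⟨v, rfl⟩; exact l1Norm_nonneg _⟩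
  have hψ_le : ∀ v : Fin n → ℝ, ψ (A v) ≤ l1Norm v := fun v =>
    ciInf_le (hbdd _) (⟨v, rfl⟩ : {x : Fin n → ℝ // A x = A v})
  have hψ_nonneg : ∀ b', 0 ≤ ψ b' := fun b' =>
    have := hne b'
    le_ciInf fun v => l1Norm_nonneg _
  have N_add : ∀ b1 b2, ψ (b1 + b2) ≤ ψ b1 + ψ b2 := by
    intro b1 b2
    have := hne b1; have := hne b2
    have key : ∀ v2 : {v : Fin n → ℝ // A v = b2}, ψ (b1 + b2) - l1Norm v2.val ≤ ψ b1 := by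
      intro v2
      refine le_ciInf fun v1 => ?_
      have h1 : ψ (b1 + b2) ≤ l1Norm (v1.val + v2.val) :=
        ciInf_le (hbdd _) (⟨v1.val + v2.val, by rw [map_add, v1.2, v2.2]⟩ :
          {x : Fin n → ℝ // A x = b1 + b2})
      have h2 := l1Norm_add_le v1.val v2.val
      linarith
    have key2 : ψ (b1 + b2) - ψ b1 ≤ ψ b2 := by
      refine le_ciInf fun v2 => ?_
      have := key v2
      linarith
    linarith
  have N_hom_le : ∀ c : ℝ, 0 < c → ∀ b', ψ (c • b') ≤ c * ψ b' := by
    intro c hc b'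
    have := hne b'
    have hdiv : ψ (c • b') / c ≤ ψ b' := by
      refine le_ciInf fun v => ?_
      have h1 : ψ (c • b') ≤ l1Norm (c • v.val) :=
        ciInf_le (hbdd _) (⟨c • v.val, by rw [map_smul, v.2]⟩ : {x : Fin n → ℝ // A x = c • b'})
      rw [l1Norm_smul, abs_of_pos hc] at h1
      rw [div_le_iff₀ hc, mul_comm]
      exact h1
    rw [div_le_iff₀ hc] at hdiv
    linarith [hdiv]
  have N_hom : ∀ c : ℝ, 0 < c → ∀ b', ψ (c • b') = c * ψ b' := by
    intro c hc b'
    refine le_antisymm (N_hom_le c hc b') ?_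
    have h2 := N_hom_le c⁻¹ (by positivity) (c • b')
    rw [inv_smul_smul₀ (ne_of_gt hc)] at h2
    have hc' : (0:ℝ) < c⁻¹ := by positivity
    calc c * ψ b' ≤ c * (c⁻¹ * ψ (c • b')) := by
          exact mul_le_mul_of_nonneg_left h2 (le_of_lt hc)
      _ = ψ (c • b') := by field_simp
  have hψb : ψ b = l1Norm w := by
    have := hne b
    refine le_antisymm (hw ▸ hψ_le w) (le_ciInf fun v => hmin v.val v.2)
  -- Hahn-Banach extension
  have hfle : ∀ x : (LinearPMap.mkSpanSingleton (K := ℝ) (L := ℝ) (σ := RingHom.id ℝ) b (l1Norm w) hb).domain,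
      (LinearPMap.mkSpanSingleton (K := ℝ) (L := ℝ) (σ := RingHom.id ℝ) b (l1Norm w) hb) x ≤ ψ x.val := by
    rintro ⟨x, hx⟩
    obtain ⟨t, rfl⟩ := Submodule.mem_span_singleton.1 hx
    have happ : (LinearPMap.mkSpanSingleton (K := ℝ) (L := ℝ) (σ := RingHom.id ℝ) b (l1Norm w) hb)
        ⟨t • b, hx⟩ = t * l1Norm w := by
      rw [LinearPMap.mkSpanSingleton'_apply, smul_eq_mul, RingHom.id_apply]
    rw [happ]
    rcases le_or_gt t 0 with ht | ht
    · have : t * l1Norm w ≤ 0 := mul_nonpos_of_nonpos_of_nonneg ht (l1Norm_nonneg w)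
      exact this.trans (hψ_nonneg _)
    · rw [N_hom t ht b, hψb]
  obtain ⟨g, hg_eq, hg_le⟩ := exists_extension_of_le_sublinear
    (LinearPMap.mkSpanSingleton (K := ℝ) (L := ℝ) (σ := RingHom.id ℝ) b (l1Norm w) hb) ψ N_hom N_add hfle
  · -- use g
    have hgb : g b = l1Norm w := by
      have := hg_eq ⟨b, Submodule.mem_span_singleton_self b⟩
      rw [this, LinearPMap.mkSpanSingleton_apply]
    set η : Fin m → ℝ := fun j => g (Pi.single j 1) with hη
    have hgAv : ∀ v : Fin n → ℝ, g (A v) ≤ l1Norm v := fun v => (hg_le (A v)).trans (hψ_le v)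
    have hT : ∀ i, |transposeApply A η i| ≤ 1 := by
      intro i
      rw [hη, transposeApply_eq A g i, abs_le]
      constructor
      · have := hgAv (-(Pi.single i 1))
        rw [map_neg, map_neg, l1Norm_neg, l1Norm_single] at this
        linarith
      · have := hgAv (Pi.single i 1)
        rwa [l1Norm_single] at this
    have hTle : linfNorm (transposeApply A η) ≤ 1 := by
      rw [linfNorm_eq_norm]
      rw [pi_norm_le_iff_of_nonneg (by norm_num : (0:ℝ) ≤ 1)]
      intro i
      rw [Real.norm_eq_abs]
      exact hT i
    have hηle : l1Norm η ≤ 1 / μ := by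
      have := (hA η).trans hTle
      rw [le_div_iff₀ hμ, mul_comm]
      exact this
    calc l1Norm w = g b := hgb.symm
      _ = ∑ j, b j * η j := lin_rep g b
      _ ≤ ∑ j, |b j * η j| := Finset.sum_le_sum fun j _ => le_abs_self _
      _ ≤ ∑ j, linfNorm b * |η j| := Finset.sum_le_sum fun j _ => by
          rw [abs_mul]
          exact mul_le_mul_of_nonneg_right (abs_le_linfNorm b j) (abs_nonneg _)
      _ = linfNorm b * l1Norm η := by rw [l1Norm, Finset.mul_sum]
      _ ≤ linfNorm b * (1 / μ) := mul_le_mul_of_nonneg_left hηle (linfNorm_nonneg b)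
      _ = linfNorm b / μ := by ring


lemma H0_summable {δ : ℝ} (h0 : 0 ≤ δ) (h1 : δ < 1) :
    Summable (fun ℓ : ℕ => δ ^ (2 ^ ℓ)) := by
  refine Summable.of_nonneg_of_le (fun ℓ => pow_nonneg h0 _) (fun ℓ => ?_)
    (summable_geometric_of_lt_one h0 h1)
  exact pow_le_pow_of_le_one h0 h1.le (Nat.lt_two_pow_self (n := ℓ)).le

lemma sum_le_H0 {δ : ℝ} (h0 : 0 ≤ δ) (h1 : δ < 1) (k : ℕ) :
    ∑ ℓ ∈ Finset.range k, δ ^ (2 ^ ℓ) ≤ H0 δ :=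
  Summable.sum_le_tsum _ (fun ℓ _ => pow_nonneg h0 _) (H0_summable h0 h1)

lemma taylor_bound {n m : ℕ} {P : (Fin n → ℝ) → Fin m → ℝ} (hP : ContDiff ℝ 1 P)
    {L : ℝ} (hL : 0 ≤ L) (u w : Fin n → ℝ) (S : Set (Fin n → ℝ))
    (hseg : ∀ t : ℝ, t ∈ Set.Icc (0:ℝ) 1 → u - t • w ∈ S)
    (hLip : ∀ a ∈ S, ∀ b ∈ S, ∀ v : Fin n → ℝ,
      linfNorm ((fderiv ℝ P a - fderiv ℝ P b) v) ≤ L * l1Norm (a - b) * l1Norm v)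
    (hweq : fderiv ℝ P u w = P u) :
    linfNorm (P (u - w)) ≤ L / 2 * l1Norm w ^ 2 := by
  have hd : Differentiable ℝ P := hP.differentiable one_ne_zero
  have hderiv : ∀ t : ℝ, HasDerivAt (fun t : ℝ => P (u - t • w))
      (-((fderiv ℝ P (u - t • w)) w)) t := by
    intro t
    have h1 : HasDerivAt (fun t : ℝ => u - t • w) (-w) t := by
      simpa using ((hasDerivAt_id t).smul_const w).const_sub u
    have h2 := (hd (u - t • w)).hasFDerivAt
    have := h2.comp_hasDerivAt t h1
    rw [map_neg] at this
    exact this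
  have hcont : Continuous fun t : ℝ => (fderiv ℝ P (u - t • w)) w := by
    have h1 : Continuous fun t : ℝ => fderiv ℝ P (u - t • w) :=
      (hP.continuous_fderiv one_ne_zero).comp (by continuity)
    exact h1.clm_apply continuous_const
  have hInt : IntervalIntegrable (fun t => -((fderiv ℝ P (u - t • w)) w)) MeasureTheory.volume 0 1 :=
    (hcont.neg).intervalIntegrable 0 1
  have hFTC := intervalIntegral.integral_eq_sub_of_hasDerivAt
    (f := fun t : ℝ => P (u - t • w)) (fun t _ => hderiv t) hInt
  have hI : (∫ t in (0:ℝ)..1, (fderiv ℝ P (u - t • w)) w) = P u - P (u - w) := by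
    rw [intervalIntegral.integral_neg] at hFTC
    simp only [one_smul, zero_smul, sub_zero] at hFTC
    have := congrArg Neg.neg hFTC
    rw [neg_neg, neg_sub] at this
    exact this
  have key : P (u - w) = ∫ t in (0:ℝ)..1, ((fderiv ℝ P u - fderiv ℝ P (u - t • w)) w) := by
    have hsub : (fun t : ℝ => ((fderiv ℝ P u - fderiv ℝ P (u - t • w)) w))
        = fun t : ℝ => (fderiv ℝ P u) w - (fderiv ℝ P (u - t • w)) w := by
      funext t; simp
    rw [hsub, intervalIntegral.integral_sub (continuous_const.intervalIntegrable 0 1)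
      (hcont.intervalIntegrable 0 1), hI]
    simp [hweq]
  rw [key, linfNorm_eq_norm]
  have hbound : ∀ᵐ t ∂MeasureTheory.volume.restrict (Set.uIoc (0:ℝ) 1),
      ‖(fderiv ℝ P u - fderiv ℝ P (u - t • w)) w‖ ≤ (L * l1Norm w * l1Norm w) * t := by
    rw [MeasureTheory.ae_restrict_iff' measurableSet_uIoc]
    refine Filter.Eventually.of_forall fun t ht => ?_
    rw [Set.uIoc_of_le (by norm_num : (0:ℝ) ≤ 1)] at ht
    have ht0 : 0 < t := ht.1
    have ht1 : t ≤ 1 := ht.2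
    have ha : u ∈ S := by simpa using hseg 0 (by constructor <;> norm_num)
    have hb : u - t • w ∈ S := hseg t ⟨ht0.le, ht1⟩
    have := hLip u ha (u - t • w) hb w
    rw [← linfNorm_eq_norm]
    have harg : u - (u - t • w) = t • w := by abel
    rw [harg, l1Norm_smul, abs_of_pos ht0] at this
    calc linfNorm ((fderiv ℝ P u - fderiv ℝ P (u - t • w)) w)
        ≤ L * (t * l1Norm w) * l1Norm w := this
      _ = (L * l1Norm w * l1Norm w) * t := by ring
  have hgint : IntervalIntegrable (fun t => (L * l1Norm w * l1Norm w) * t)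
      MeasureTheory.volume 0 1 := (continuous_const.mul continuous_id).intervalIntegrable 0 1
  have := intervalIntegral.norm_integral_le_of_norm_le zero_le_one (by
    filter_upwards [(MeasureTheory.ae_restrict_iff' measurableSet_uIoc).1 hbound] with t ht ht'
    exact ht (by rwa [Set.uIoc_of_le zero_le_one])) hgint
  refine this.trans ?_
  have : (∫ t in (0:ℝ)..1, (L * l1Norm w * l1Norm w) * t)
      = (L * l1Norm w * l1Norm w) * (1/2) := by
    rw [intervalIntegral.integral_const_mul, integral_id]
    norm_num
  rw [this]
  ring_nf
  nlinarith [l1Norm_nonneg w]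
lemma l1Norm_sum_le {d : ℕ} (w : ℕ → Fin d → ℝ) (k : ℕ) :
    l1Norm (∑ j ∈ Finset.range k, w j) ≤ ∑ j ∈ Finset.range k, l1Norm (w j) := by
  induction k with
  | zero => simp [l1Norm]
  | succ k ih =>
    rw [Finset.sum_range_succ, Finset.sum_range_succ]
    exact (l1Norm_add_le _ _).trans (add_le_add ih le_rfl)

/-- Mysovskikh-type convergence of the sparse-Newton method:
under assumptions (A'), (B) on the ball `B_ρ` and the conditions
`h = Ls/μ² < 2`, `(2μ/L)H₀(h/2) < ρ`, every sparse-Newton sequence from `u⁰`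
with unit step-size is well defined (each `P'(uᵏ)` is surjective), stays in
`B_ρ`, and converges to a zero `u*` of `P` with
`‖u⁰ − u*‖₁ ≤ (2μ/L)H₀(Ls/(2μ²))`. -/
theorem statement6 {n m : ℕ} (P : (Fin n → ℝ) → (Fin m → ℝ)) (hP : ContDiff ℝ 1 P)
    (u0 : Fin n → ℝ) (s : ℝ) (hs : s = linfNorm (P u0))
    (ρ : ℝ) (hρ : 0 < ρ) (Bρ : Set (Fin n → ℝ)) (hB : Bρ = {v | l1Norm (v - u0) ≤ ρ})
    (μ : ℝ) (hμ : 0 < μ)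
    (hA' : ∀ v ∈ Bρ, ∀ h : Fin m → ℝ,
      μ * l1Norm h ≤ linfNorm (transposeApply (fderiv ℝ P v) h))
    (L : ℝ) (hL : 0 < L)
    (hLip : ∀ a ∈ Bρ, ∀ b ∈ Bρ, ∀ v : Fin n → ℝ,
      linfNorm ((fderiv ℝ P a - fderiv ℝ P b) v) ≤ L * l1Norm (a - b) * l1Norm v)
    (hcond1 : L * s / μ ^ 2 < 2)
    (hcond2 : 2 * μ / L * H0 (L * s / μ ^ 2 / 2) < ρ)
    -- a sparse-Newton sequence from `u0` with unit step-size: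
    (u w : ℕ → Fin n → ℝ) (hu0 : u 0 = u0)
    (hw_eq : ∀ k, fderiv ℝ P (u k) (w k) = P (u k))
    (hw_min : ∀ k, ∀ v : Fin n → ℝ, fderiv ℝ P (u k) v = P (u k) →
      l1Norm (w k) ≤ l1Norm v)
    (hstep : ∀ k, u (k + 1) = u k - w k) :
    (∀ k, Function.Surjective (fderiv ℝ P (u k))) ∧
    (∀ k, u k ∈ Bρ) ∧
    ∃ ustar : Fin n → ℝ, Tendsto u atTop (𝓝 ustar) ∧ P ustar = 0 ∧
      l1Norm (u0 - ustar) ≤ 2 * μ / L * H0 (L * s / (2 * μ ^ 2)) := by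
  set δ : ℝ := L * s / μ ^ 2 / 2 with hδ
  have hs0 : 0 ≤ s := hs ▸ linfNorm_nonneg _
  have hδ0 : 0 ≤ δ := by
    rw [hδ]
    exact div_nonneg (div_nonneg (mul_nonneg hL.le hs0) (by positivity)) (by norm_num)
  have hδ1 : δ < 1 := by rw [hδ]; linarith
  have hLne : L ≠ 0 := hL.ne'
  have hμne : μ ≠ 0 := hμ.ne'
  -- w bound given membership and residual bound
  have wb : ∀ k, u k ∈ Bρ → linfNorm (P (u k)) ≤ 2 * μ ^ 2 / L * δ ^ 2 ^ k →
      l1Norm (w k) ≤ 2 * μ / L * δ ^ 2 ^ k := by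
    intro k hmem hsk
    have h1 := sparse_bound (fderiv ℝ P (u k)) μ hμ (hA' (u k) hmem)
      (P (u k)) (w k) (hw_eq k) (hw_min k)
    have h2 : linfNorm (P (u k)) / μ ≤ 2 * μ ^ 2 / L * δ ^ 2 ^ k / μ := by gcongr
    have h3 : 2 * μ ^ 2 / L * δ ^ 2 ^ k / μ = 2 * μ / L * δ ^ 2 ^ k := by
      field_simp
    linarith [h1, h2, h3]
  -- the invariant
  have inv : ∀ k, u k ∈ Bρ ∧ linfNorm (P (u k)) ≤ 2 * μ ^ 2 / L * δ ^ 2 ^ k ∧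
      l1Norm (u k - u0) ≤ 2 * μ / L * ∑ j ∈ Finset.range k, δ ^ 2 ^ j := by
    intro k
    induction k with
    | zero =>
      refine ⟨?_, ?_, ?_⟩
      · rw [hB, hu0]; simp only [Set.mem_setOf_eq, sub_self]
        have : l1Norm (0 : Fin n → ℝ) = 0 := by simp [l1Norm]
        rw [this]; exact hρ.le
      · rw [hu0, ← hs]
        have : 2 * μ ^ 2 / L * δ ^ 2 ^ 0 = s := by
          rw [hδ, pow_zero, pow_one]; field_simp
        rw [this]
      · rw [hu0]; simp [l1Norm]
    | succ k ih =>
      obtain ⟨hmem, hsk, hdist⟩ := ih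
      have hwk := wb k hmem hsk
      have hC2 : (0:ℝ) ≤ 2 * μ / L := by positivity
      have hseg : ∀ t ∈ Set.Icc (0:ℝ) 1, u k - t • w k ∈ Bρ := by
        intro t ht
        rw [hB]; simp only [Set.mem_setOf_eq]
        have heq : u k - t • w k - u0 = (u k - u0) + (-(t • w k)) := by abel
        rw [heq]
        have habs : |t| ≤ 1 := abs_le.2 ⟨by linarith [ht.1], ht.2⟩
        calc l1Norm ((u k - u0) + (-(t • w k)))
            ≤ l1Norm (u k - u0) + l1Norm (-(t • w k)) := l1Norm_add_le _ _
          _ = l1Norm (u k - u0) + |t| * l1Norm (w k) := by rw [l1Norm_neg, l1Norm_smul]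
          _ ≤ 2 * μ / L * ∑ j ∈ Finset.range k, δ ^ 2 ^ j + 1 * (2 * μ / L * δ ^ 2 ^ k) := by
              refine add_le_add hdist ?_
              have h0 : 0 ≤ l1Norm (w k) := l1Norm_nonneg _
              nlinarith [abs_nonneg t]
          _ = 2 * μ / L * ∑ j ∈ Finset.range (k+1), δ ^ 2 ^ j := by
              rw [Finset.sum_range_succ]; ring
          _ ≤ 2 * μ / L * H0 δ :=
              mul_le_mul_of_nonneg_left (sum_le_H0 hδ0 hδ1 _) hC2
          _ ≤ ρ := hcond2.le
      have hmem1 : u (k+1) ∈ Bρ := by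
        rw [hstep k]
        have := hseg 1 ⟨by norm_num, le_rfl⟩
        simpa using this
      refine ⟨hmem1, ?_, ?_⟩
      · have htay := taylor_bound hP hL.le (u k) (w k) Bρ
          (fun t ht => hseg t ht) hLip (hw_eq k)
        calc linfNorm (P (u (k+1))) = linfNorm (P (u k - w k)) := by rw [hstep k]
          _ ≤ L / 2 * l1Norm (w k) ^ 2 := htay
          _ ≤ L / 2 * (2 * μ / L * δ ^ 2 ^ k) ^ 2 :=
              mul_le_mul_of_nonneg_left
                (pow_le_pow_left₀ (l1Norm_nonneg _) hwk 2) (by positivity)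
          _ = 2 * μ ^ 2 / L * δ ^ 2 ^ (k+1) := by
              have hp : δ ^ 2 ^ (k+1) = (δ ^ 2 ^ k) ^ 2 := by
                rw [pow_succ 2 k, pow_mul]
              rw [hp]; field_simp
      · have heq : u (k+1) - u0 = (u k - u0) + (-(w k)) := by rw [hstep k]; abel
        rw [heq]
        calc l1Norm ((u k - u0) + (-(w k)))
            ≤ l1Norm (u k - u0) + l1Norm (-(w k)) := l1Norm_add_le _ _
          _ = l1Norm (u k - u0) + l1Norm (w k) := by rw [l1Norm_neg]
          _ ≤ 2 * μ / L * ∑ j ∈ Finset.range k, δ ^ 2 ^ j + 2 * μ / L * δ ^ 2 ^ k :=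
              add_le_add hdist hwk
          _ = 2 * μ / L * ∑ j ∈ Finset.range (k+1), δ ^ 2 ^ j := by
              rw [Finset.sum_range_succ]; ring
  -- conclusions
  have hwbound : ∀ k, l1Norm (w k) ≤ 2 * μ / L * δ ^ 2 ^ k :=
    fun k => wb k (inv k).1 (inv k).2.1
  refine ⟨fun k => surj_of_transpose _ μ hμ (hA' (u k) (inv k).1),
    fun k => (inv k).1, ?_⟩
  have hsumw : Summable (fun k : ℕ => 2 * μ / L * δ ^ 2 ^ k) :=
    (H0_summable hδ0 hδ1).mul_left _
  have hWsum : Summable w :=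
    Summable.of_norm_bounded hsumw
      (fun k => (norm_le_l1Norm (w k)).trans (hwbound k))
  obtain ⟨S, hS⟩ : ∃ S, HasSum w S := ⟨_, hWsum.hasSum⟩
  have hu_rep : ∀ k, u k = u0 - ∑ j ∈ Finset.range k, w j := by
    intro k
    induction k with
    | zero => simp [hu0]
    | succ k ih => rw [hstep k, ih, Finset.sum_range_succ]; abel
  have ht2 : Tendsto u atTop (𝓝 (u0 - S)) := by
    have hue : u = fun k => u0 - ∑ j ∈ Finset.range k, w j := funext hu_rep
    rw [hue]
    exact hS.tendsto_sum_nat.const_sub u0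
  refine ⟨u0 - S, ht2, ?_, ?_⟩
  · -- P (u0 - S) = 0
    have hc1 : Tendsto (fun k => P (u k)) atTop (𝓝 (P (u0 - S))) :=
      ((hP.continuous).tendsto _).comp ht2
    have hz : Tendsto (fun k : ℕ => 2 * μ ^ 2 / L * δ ^ 2 ^ k) atTop (𝓝 0) :=
      ((H0_summable hδ0 hδ1).mul_left (2 * μ ^ 2 / L)).tendsto_atTop_zero
    have hc2 : Tendsto (fun k => P (u k)) atTop (𝓝 0) := by
      rw [tendsto_zero_iff_norm_tendsto_zero]
      refine squeeze_zero (fun k => norm_nonneg _) (fun k => ?_) hz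
      rw [← linfNorm_eq_norm]
      exact (inv k).2.1
    exact tendsto_nhds_unique hc1 hc2
  · -- the distance bound
    have hl1 : ∀ k, l1Norm (u0 - u k) ≤ 2 * μ / L * H0 δ := by
      intro k
      have : u0 - u k = ∑ j ∈ Finset.range k, w j := by rw [hu_rep k]; abel
      rw [this]
      calc l1Norm (∑ j ∈ Finset.range k, w j)
          ≤ ∑ j ∈ Finset.range k, l1Norm (w j) := l1Norm_sum_le w k
        _ ≤ ∑ j ∈ Finset.range k, 2 * μ / L * δ ^ 2 ^ j :=
            Finset.sum_le_sum fun j _ => hwbound j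
        _ = 2 * μ / L * ∑ j ∈ Finset.range k, δ ^ 2 ^ j := by rw [Finset.mul_sum]
        _ ≤ 2 * μ / L * H0 δ :=
            mul_le_mul_of_nonneg_left (sum_le_H0 hδ0 hδ1 _) (by positivity)
    have hcont2 : Tendsto (fun k => l1Norm (u0 - u k)) atTop (𝓝 (l1Norm (u0 - (u0 - S)))) :=
      (continuous_l1Norm.tendsto _).comp (ht2.const_sub u0)
    have hfinal : l1Norm (u0 - (u0 - S)) ≤ 2 * μ / L * H0 δ :=
      le_of_tendsto hcont2 (Filter.Eventually.of_forall hl1)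
    have harg : L * s / (2 * μ ^ 2) = δ := by rw [hδ]; ring
    rw [harg]
    exact hfinal
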